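/- Let $K \subset \mathbb{R}^d$ be a convex body, $u \in S^{d-1}$, let $C = K \cap \{x : u \cdot x \geq h_K(u) - t\}$ be a cap and let $y \in K$ with $u \cdot y = h_K(u) - g$. If the Macbeath region $M(y, \tfrac12)$ is not contained in $C$, then $\tfrac{3}{2} g > t$, and consequently the hyperplane $\{x : u \cdot x = h_K(u) - \tfrac13 t\}$ separates $M(y, \tfrac12)$ from $C^{1/3}$, so $M(y, \tfrac12) \cap C^{1/3} = \varnothing$. -/
import Mathlib


open MeasureTheory
open scoped RealInnerProductSpace

/-- The Macbeath region `M(y,λ) = y + λ[(K-y) ∩ (y-K)]`. -/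
def Mregion {d : ℕ} (K : Set (EuclideanSpace ℝ (Fin d)))
    (y : EuclideanSpace ℝ (Fin d)) (l : ℝ) : Set (EuclideanSpace ℝ (Fin d)) :=
  {p | ∃ w, y + w ∈ K ∧ y - w ∈ K ∧ p = y + l • w}

lemma mem_K_of_Mregion {d : ℕ} {K : Set (EuclideanSpace ℝ (Fin d))}
    (hKconv : Convex ℝ K) {y p : EuclideanSpace ℝ (Fin d)} {w : EuclideanSpace ℝ (Fin d)}
    (hy : y ∈ K) (h1 : y + w ∈ K) (hp : p = y + (1/2 : ℝ) • w) : p ∈ K := by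
  have := hKconv hy h1 (by norm_num : (0:ℝ) ≤ 1/2) (by norm_num : (0:ℝ) ≤ 1/2) (by norm_num)
  have heq : (1/2 : ℝ) • y + (1/2 : ℝ) • (y + w) = y + (1/2 : ℝ) • w := by
    module
  rw [hp, ← heq]; exact this

/-- for a cap `C = K ∩ {x : ⟪u,x⟫ ≥ h - t}` and `y ∈ K` with
`⟪u,y⟫ = h - g`, if `M(y,1/2) ⊄ C` then `(3/2) g > t` and consequently `M(y,1/2)` is
disjoint from `C^{1/3} = K ∩ {x : ⟪u,x⟫ ≥ h - t/3}`. -/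
theorem stmt13 {d : ℕ} (K : Set (EuclideanSpace ℝ (Fin d)))
    (hKconv : Convex ℝ K) (hKcomp : IsCompact K) (hKint : (interior K).Nonempty)
    (u : EuclideanSpace ℝ (Fin d)) (hu : ‖u‖ = 1)
    (h : ℝ) (hsupp : IsGreatest ((fun x => ⟪u, x⟫) '' K) h)
    (t : ℝ) (ht : 0 < t)
    (y : EuclideanSpace ℝ (Fin d)) (hy : y ∈ K)
    (g : ℝ) (hg : ⟪u, y⟫ = h - g)
    (hnotsub : ¬ Mregion K y (1/2) ⊆ K ∩ {x | h - t ≤ ⟪u, x⟫}) :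
    3/2 * g > t ∧
    Mregion K y (1/2) ∩ (K ∩ {x | h - t/3 ≤ ⟪u, x⟫}) = ∅ := by
  have hub : ∀ x ∈ K, ⟪u, x⟫ ≤ h := fun x hx => hsupp.2 ⟨x, hx, rfl⟩
  -- inner product value of a point of M(y,1/2)
  have hinner : ∀ w : EuclideanSpace ℝ (Fin d), y + w ∈ K → y - w ∈ K →
      ⟪u, y + (1/2 : ℝ) • w⟫ = h - g + (1/2) * ⟪u, w⟫ := by
    intro w _ _
    rw [inner_add_right, real_inner_smul_right, hg]
  have hbounds : ∀ w : EuclideanSpace ℝ (Fin d), y + w ∈ K → y - w ∈ K →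
      -g ≤ ⟪u, w⟫ ∧ ⟪u, w⟫ ≤ g := by
    intro w h1 h2
    have b1 := hub _ h1
    have b2 := hub _ h2
    rw [inner_add_right, hg] at b1
    rw [inner_sub_right, hg] at b2
    constructor <;> linarith
  -- extract witness
  rw [Set.not_subset] at hnotsub
  obtain ⟨p, hpM, hpC⟩ := hnotsub
  obtain ⟨w, h1, h2, hp⟩ := hpM
  have hpK : p ∈ K := mem_K_of_Mregion hKconv hy h1 hp
  have hlt : ⟪u, p⟫ < h - t := by
    by_contra hcon
    exact hpC ⟨hpK, le_of_not_gt hcon⟩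
  have hval : ⟪u, p⟫ = h - g + (1/2) * ⟪u, w⟫ := by
    rw [hp]; exact hinner w h1 h2
  obtain ⟨hlow, hhigh⟩ := hbounds w h1 h2
  have hgt : 3/2 * g > t := by
    rw [hval] at hlt; linarith
  refine ⟨hgt, ?_⟩
  ext q
  simp only [Set.mem_inter_iff, Set.mem_empty_iff_false, iff_false, not_and, Set.mem_setOf_eq]
  rintro ⟨w', h1', h2', hq⟩ hqK
  have hval' : ⟪u, q⟫ = h - g + (1/2) * ⟪u, w'⟫ := by
    rw [hq]; exact hinner w' h1' h2'
  obtain ⟨_, hhigh'⟩ := hbounds w' h1' h2'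
  intro hge
  rw [hval'] at hge
  linarith
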